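/- arXiv:2509.23538 — 5 statements merged into one kernel-verified Lean document; each statement's English description precedes it below -/
import Mathlib

section
/- Let h : [0,∞) → ℝ be a nonnegative C² function satisfying h''(t) + c₁h'(t) ≤ c₂h(t) + c₃ with h(0) = h₀, h'(0) = h₀', where c₁, c₂ > 0 and c₃ ∈ ℝ. Set β = (-c₁ + √(c₁² + 4c₂))/2. Then for all t ≥ 0, h(t) ≤ (h₀ + c₃/(β(β+c₁)) + (h₀' - βh₀ - c₃/(β+c₁))/(c₁+2β))·e^{βt} - ((h₀' - βh₀ - c₃/(β+c₁))/(c₁+2β))·e^{-(c₁+β)t} - c₃/(β(c₁+β)). -/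
open Real Set

/-!
Since `β² + c₁β = c₂`, the operator factors as `D² + c₁D - c₂ = (D + (c₁ + β)) ∘ (D - β)`.
Hence `g = h' - βh` satisfies the first-order inequality `g' + (c₁ + β) g ≤ c₃`, and two
comparisons with the solutions of the corresponding linear equations (via the integrating
factors `e^{(c₁+β)t}` and `e^{-βt}`) first bound `g`, then `h`.
-/

theorem hasDerivAt_exp_const_mul (k t : ℝ) :
    HasDerivAt (fun t => exp (k * t)) (k * exp (k * t)) t := by
  convert ((hasDerivAt_id' t).const_mul k).exp using 1
  ring

theorem le_of_hasDerivWithinAt_sub_mul_le {f F f' F' : ℝ → ℝ} {k a : ℝ}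
    (hf : ∀ t ∈ Ici a, HasDerivWithinAt f (f' t) (Ici a) t)
    (hF : ∀ t ∈ Ici a, HasDerivWithinAt F (F' t) (Ici a) t)
    (hle : ∀ t ∈ Ioi a, f' t - k * f t ≤ F' t - k * F t) (ha : f a ≤ F a) :
    ∀ t ∈ Ici a, f t ≤ F t := by
  set u := fun t => exp (-k * t) * (f t - F t)
  have hu : ∀ t ∈ Ici a, HasDerivWithinAt u
      (exp (-k * t) * ((f' t - k * f t) - (F' t - k * F t))) (Ici a) t := by
    intro t ht
    exact ((hasDerivAt_exp_const_mul (-k) t).hasDerivWithinAt.mul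
      ((hf t ht).sub (hF t ht))).congr_deriv (by rw [Pi.sub_apply]; ring)
  have hanti : AntitoneOn u (Ici a) := by
    refine antitoneOn_of_hasDerivWithinAt_nonpos (convex_Ici a)
      (f' := fun t => exp (-k * t) * ((f' t - k * f t) - (F' t - k * F t)))
      (fun t ht => (hu t ht).continuousWithinAt) (fun t ht => ?_) (fun t ht => ?_)
    · rw [interior_Ici] at ht ⊢
      exact (hu t (Ioi_subset_Ici_self ht)).mono Ioi_subset_Ici_self
    · rw [interior_Ici] at ht
      exact mul_nonpos_of_nonneg_of_nonpos (exp_pos _).le (sub_nonpos.2 (hle t ht))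
  intro t ht
  have hua : u a ≤ 0 := mul_nonpos_of_nonneg_of_nonpos (exp_pos _).le (sub_nonpos.2 ha)
  exact sub_nonpos.1 <|
    nonpos_of_mul_nonpos_right ((hanti self_mem_Ici ht ht).trans hua) (exp_pos _)

theorem le_of_hasDerivWithinAt_add_mul_le_const {g g' : ℝ → ℝ} {γ c : ℝ} (hγ : γ ≠ 0)
    (hg : ∀ t ∈ Ici (0 : ℝ), HasDerivWithinAt g (g' t) (Ici 0) t)
    (hle : ∀ t ∈ Ici (0 : ℝ), g' t + γ * g t ≤ c) :
    ∀ t ∈ Ici (0 : ℝ), g t ≤ (g 0 - c / γ) * exp (-γ * t) + c / γ := by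
  refine le_of_hasDerivWithinAt_sub_mul_le (k := -γ) hg
    (fun t _ => ((hasDerivAt_exp_const_mul (-γ) t).const_mul _).hasDerivWithinAt.add_const _)
    (fun t ht => ?_) (by simp)
  have := hle t (Ioi_subset_Ici_self ht)
  field_simp
  linarith

theorem le_of_hasDerivWithinAt_sub_mul_le_exp_add_const {h h' : ℝ → ℝ} {β γ A B : ℝ}
    (hβ : β ≠ 0) (hβγ : β + γ ≠ 0)
    (hh : ∀ t ∈ Ici (0 : ℝ), HasDerivWithinAt h (h' t) (Ici 0) t)
    (hle : ∀ t ∈ Ici (0 : ℝ), h' t - β * h t ≤ A * exp (-γ * t) + B) :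
    ∀ t ∈ Ici (0 : ℝ), h t ≤ (h 0 + A / (β + γ) + B / β) * exp (β * t)
      - A / (β + γ) * exp (-γ * t) - B / β := by
  refine le_of_hasDerivWithinAt_sub_mul_le (k := β) hh
    (fun t _ => (((hasDerivAt_exp_const_mul β t).const_mul _).sub
      ((hasDerivAt_exp_const_mul (-γ) t).const_mul _)).hasDerivWithinAt.sub_const _)
    (fun t ht => (hle t (Ioi_subset_Ici_self ht)).trans_eq ?_) (le_of_eq (by simp; ring))
  field_simp
  ring

theorem abs_lt_sqrt_sq_add_four_mul (c₁ : ℝ) {c₂ : ℝ} (hc₂ : 0 < c₂) :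
    |c₁| < √(c₁ ^ 2 + 4 * c₂) := by
  rw [← sqrt_sq_eq_abs]
  exact sqrt_lt_sqrt (sq_nonneg _) (by linarith)

theorem stmt0_general (c₁ c₂ c₃ h₀ h₀' β : ℝ) (hc₂ : 0 < c₂)
    (hβ : β = (-c₁ + Real.sqrt (c₁ ^ 2 + 4 * c₂)) / 2)
    (h : ℝ → ℝ) (hC2 : ContDiffOn ℝ 2 h (Ici 0))
    (hineq : ∀ t ∈ Ici (0 : ℝ),
      derivWithin (derivWithin h (Ici 0)) (Ici 0) t + c₁ * derivWithin h (Ici 0) t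
        ≤ c₂ * h t + c₃)
    (hh0 : h 0 = h₀) (hh0' : derivWithin h (Ici 0) 0 = h₀') :
    ∀ t ∈ Ici (0 : ℝ),
      h t ≤ (h₀ + c₃ / (β * (β + c₁)) + (h₀' - β * h₀ - c₃ / (β + c₁)) / (c₁ + 2 * β))
              * Real.exp (β * t)
            - ((h₀' - β * h₀ - c₃ / (β + c₁)) / (c₁ + 2 * β)) * Real.exp (-(c₁ + β) * t)
            - c₃ / (β * (c₁ + β)) := by
  obtain ⟨hneg, hpos⟩ := abs_lt.1 (abs_lt_sqrt_sq_add_four_mul c₁ hc₂)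
  have hβ_pos : 0 < β := by rw [hβ]; linarith
  have hc₁β_pos : 0 < c₁ + β := by rw [hβ]; linarith
  have hroot : β * (c₁ + β) = c₂ := by
    rw [hβ]; linear_combination (1 / 4) * sq_sqrt (show 0 ≤ c₁ ^ 2 + 4 * c₂ by positivity)
  set D := derivWithin h (Ici (0 : ℝ))
  have hD : ∀ t ∈ Ici (0 : ℝ), HasDerivWithinAt h (D t) (Ici 0) t := fun t ht =>
    (hC2.differentiableOn (by norm_num) t ht).hasDerivWithinAt
  have hD2 : ∀ t ∈ Ici (0 : ℝ), HasDerivWithinAt D (derivWithin D (Ici 0) t) (Ici 0) t :=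
    fun t ht => ((hC2.derivWithin (m := 1) (uniqueDiffOn_Ici 0) (by norm_num)).differentiableOn
      (by norm_num) t ht).hasDerivWithinAt
  have hfirst := le_of_hasDerivWithinAt_add_mul_le_const (g := fun t => D t - β * h t) (c := c₃)
    hc₁β_pos.ne' (fun t ht => (hD2 t ht).sub ((hD t ht).const_mul β))
    (fun t ht => by linear_combination hineq t ht - h t * hroot)
  intro t ht
  subst hh0 hh0'
  refine (le_of_hasDerivWithinAt_sub_mul_le_exp_add_const hβ_pos.ne' (by linarith) hD hfirst
    t ht).trans_eq ?_
  simp only [div_mul_eq_div_div]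
  ring

/-- Second-order differential inequality comparison (Lemma 2.2). -/
theorem stmt0 (c₁ c₂ c₃ h₀ h₀' β : ℝ) (hc₁ : 0 < c₁) (hc₂ : 0 < c₂)
    (hβ : β = (-c₁ + Real.sqrt (c₁ ^ 2 + 4 * c₂)) / 2)
    (h : ℝ → ℝ) (hC2 : ContDiffOn ℝ 2 h (Ici 0))
    (hnn : ∀ t ∈ Ici (0 : ℝ), 0 ≤ h t)
    (hineq : ∀ t ∈ Ici (0 : ℝ),
      derivWithin (derivWithin h (Ici 0)) (Ici 0) t + c₁ * derivWithin h (Ici 0) t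
        ≤ c₂ * h t + c₃)
    (hh0 : h 0 = h₀) (hh0' : derivWithin h (Ici 0) 0 = h₀') :
    ∀ t ∈ Ici (0 : ℝ),
      h t ≤ (h₀ + c₃ / (β * (β + c₁)) + (h₀' - β * h₀ - c₃ / (β + c₁)) / (c₁ + 2 * β))
              * Real.exp (β * t)
            - ((h₀' - β * h₀ - c₃ / (β + c₁)) / (c₁ + 2 * β)) * Real.exp (-(c₁ + β) * t)
            - c₃ / (β * (c₁ + β)) :=
  stmt0_general c₁ c₂ c₃ h₀ h₀' β hc₂ hβ h hC2 hineq hh0 hh0'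
end

section
/- For a ≥ 0, an integer l ≥ 0, and a Schwartz function f on ℝ³, one has ‖∇^l f‖_{L²} ≤ C·‖∇^{l+1} f‖_{L²}^{1-θ}·‖Λ^{-a} f‖_{L²}^{θ} where θ = 1/(1+l+a), with a constant C independent of f. Here Λ^{-a} f is defined on the Fourier side by multiplication with |ξ|^{-a}. -/
/-!
On the Fourier side the three quantities are weighted `L²` norms of `f̂` with weights
`|ξ|^{2l}`, `|ξ|^{2(l+1)}` and `|ξ|^{-2a}`, and `θ = 1/(1+l+a)` is exactly the value for which
`2l = (1-θ)·2(l+1) + θ·(-2a)`. Hence `|ξ|^{2l}|f̂|² = (|ξ|^{2(l+1)}|f̂|²)^{1-θ} (|ξ|^{-2a}|f̂|²)^θ`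
away from `ξ = 0`, and Hölder's inequality with exponents `1/(1-θ)` and `1/θ` gives the
estimate with `C = 1`.
-/

open Real MeasureTheory FourierTransform

section Interpolation

variable {α : Type*} [MeasurableSpace α] {μ : Measure α}

theorem integral_rpow_mul_rpow_le_of_nonneg {f g : α → ℝ} (hf : Integrable f μ)
    (hg : Integrable g μ) (hf₀ : 0 ≤ᵐ[μ] f) (hg₀ : 0 ≤ᵐ[μ] g) {p q : ℝ} (hp : 0 ≤ p)
    (hq : 0 ≤ q) (hpq : p + q = 1) :
    ∫ x, f x ^ p * g x ^ q ∂μ ≤ (∫ x, f x ∂μ) ^ p * (∫ x, g x ∂μ) ^ q := by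
  have hfg₀ : 0 ≤ᵐ[μ] fun x => f x ^ p * g x ^ q := by
    filter_upwards [hf₀, hg₀] with x hfx hgx
    exact mul_nonneg (rpow_nonneg hfx p) (rpow_nonneg hgx q)
  have hmeas : AEStronglyMeasurable (fun x => f x ^ p * g x ^ q) μ :=
    ((hf.aemeasurable.pow_const p).mul (hg.aemeasurable.pow_const q)).aestronglyMeasurable
  have hofReal : ∀ᵐ x ∂μ, ENNReal.ofReal (f x ^ p * g x ^ q) =
      ENNReal.ofReal (f x) ^ p * ENNReal.ofReal (g x) ^ q := by
    filter_upwards [hf₀, hg₀] with x hfx hgx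
    rw [ENNReal.ofReal_mul (rpow_nonneg hfx p), ENNReal.ofReal_rpow_of_nonneg hfx hp,
      ENNReal.ofReal_rpow_of_nonneg hgx hq]
  rw [integral_eq_lintegral_of_nonneg_ae hfg₀ hmeas,
    integral_eq_lintegral_of_nonneg_ae hf₀ hf.aestronglyMeasurable,
    integral_eq_lintegral_of_nonneg_ae hg₀ hg.aestronglyMeasurable,
    ENNReal.toReal_rpow, ENNReal.toReal_rpow, ← ENNReal.toReal_mul, lintegral_congr_ae hofReal]
  refine ENNReal.toReal_mono ?_ (ENNReal.lintegral_mul_norm_pow_le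
    hf.aemeasurable.ennreal_ofReal hg.aemeasurable.ennreal_ofReal hp hq hpq)
  exact ENNReal.mul_ne_top (ENNReal.rpow_ne_top_of_nonneg hp hf.lintegral_lt_top.ne)
    (ENNReal.rpow_ne_top_of_nonneg hq hg.lintegral_lt_top.ne)

theorem rpow_convexComb_mul_eq {r x : ℝ} (hr : 0 < r) (hx : 0 ≤ x) (p q θ : ℝ) :
    r ^ ((1 - θ) * p + θ * q) * x = (r ^ p * x) ^ (1 - θ) * (r ^ q * x) ^ θ := by
  rw [mul_rpow (by positivity) hx, mul_rpow (by positivity) hx, ← rpow_mul hr.le,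
    ← rpow_mul hr.le, mul_comm p, mul_comm q]
  calc r ^ ((1 - θ) * p + θ * q) * x = r ^ ((1 - θ) * p) * r ^ (θ * q) * x ^ ((1 - θ) + θ) := by
        rw [sub_add_cancel, rpow_one, rpow_add hr]
    _ = _ := by rw [rpow_add' hx (by simp)]; ring

theorem integral_rpow_mul_le_of_convexComb {w u : α → ℝ} (hw : ∀ᵐ x ∂μ, 0 < w x)
    (hu : 0 ≤ᵐ[μ] u) {p q s θ : ℝ} (hθ₀ : 0 ≤ θ) (hθ₁ : θ ≤ 1) (hs : (1 - θ) * p + θ * q = s)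
    (hp : Integrable (fun x => w x ^ p * u x) μ) (hq : Integrable (fun x => w x ^ q * u x) μ) :
    ∫ x, w x ^ s * u x ∂μ ≤
      (∫ x, w x ^ p * u x ∂μ) ^ (1 - θ) * (∫ x, w x ^ q * u x ∂μ) ^ θ := by
  have hnonneg (t : ℝ) : 0 ≤ᵐ[μ] fun x => w x ^ t * u x := by
    filter_upwards [hw, hu] with x hwx hux using mul_nonneg (rpow_nonneg hwx.le t) hux
  calc ∫ x, w x ^ s * u x ∂μ
      = ∫ x, (w x ^ p * u x) ^ (1 - θ) * (w x ^ q * u x) ^ θ ∂μ := by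
        refine integral_congr_ae ?_
        filter_upwards [hw, hu] with x hwx hux
        rw [← hs, rpow_convexComb_mul_eq hwx hux]
    _ ≤ _ := integral_rpow_mul_rpow_le_of_nonneg hp hq (hnonneg p) (hnonneg q) (by linarith) hθ₀
        (sub_add_cancel 1 θ)

end Interpolation

theorem rpow_le_rpow_rpow_mul_rpow_rpow {L A B θ r : ℝ} (hL : 0 ≤ L) (hA : 0 ≤ A) (hB : 0 ≤ B)
    (hr : 0 ≤ r) (h : L ≤ A ^ (1 - θ) * B ^ θ) :
    L ^ r ≤ (A ^ r) ^ (1 - θ) * (B ^ r) ^ θ := by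
  calc L ^ r ≤ (A ^ (1 - θ) * B ^ θ) ^ r := rpow_le_rpow hL h hr
    _ = (A ^ r) ^ (1 - θ) * (B ^ r) ^ θ := by
      rw [mul_rpow (rpow_nonneg hA _) (rpow_nonneg hB _), ← rpow_mul hA, ← rpow_mul hB,
        ← rpow_mul hA, ← rpow_mul hB, mul_comm (1 - θ), mul_comm θ]

theorem SchwartzMap.integrable_pow_mul_norm_sq {E V : Type*} [NormedAddCommGroup E]
    [NormedSpace ℝ E] [NormedAddCommGroup V] [NormedSpace ℝ V] [MeasurableSpace E] [BorelSpace E]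
    [SecondCountableTopology E] (μ : Measure E) [μ.HasTemperateGrowth] (f : SchwartzMap E V)
    (k : ℕ) : Integrable (fun x => ‖x‖ ^ k * ‖f x‖ ^ 2) μ := by
  have := (f.integrable_pow_mul μ k).mul_bdd (c := SchwartzMap.seminorm ℝ 0 0 f)
    f.continuous.norm.aestronglyMeasurable (.of_forall fun x => by
      simpa using f.norm_le_seminorm ℝ x)
  simpa only [sq, mul_assoc] using this

/-- Fractional Gagliardo–Nirenberg interpolation (Lemma 2.3), stated on the Fourier side:
`‖∇^l f‖_{L²} ≤ C ‖∇^{l+1} f‖_{L²}^{1-θ} ‖Λ^{-a} f‖_{L²}^{θ}` with `θ = 1/(1+l+a)`,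
where by Plancherel `‖∇^m f‖_{L²} = ‖|ξ|^m f̂‖_{L²}` and `Λ^{-a}` is the Fourier
multiplier `|ξ|^{-a}`. -/
theorem stmt1 (a : ℝ) (ha : 0 ≤ a) (l : ℕ) :
    ∃ C > 0, ∀ f : SchwartzMap (EuclideanSpace ℝ (Fin 3)) ℂ,
      Integrable (fun ξ : EuclideanSpace ℝ (Fin 3) =>
        ‖ξ‖ ^ (-(2 * a)) * ‖𝓕 (⇑f : EuclideanSpace ℝ (Fin 3) → ℂ) ξ‖ ^ 2) →
      (∫ ξ : EuclideanSpace ℝ (Fin 3),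
          ‖ξ‖ ^ (2 * l : ℝ) * ‖𝓕 (⇑f : EuclideanSpace ℝ (Fin 3) → ℂ) ξ‖ ^ 2) ^ ((1 : ℝ) / 2)
        ≤ C *
          ((∫ ξ : EuclideanSpace ℝ (Fin 3),
              ‖ξ‖ ^ (2 * (l + 1) : ℝ) * ‖𝓕 (⇑f : EuclideanSpace ℝ (Fin 3) → ℂ) ξ‖ ^ 2) ^ ((1 : ℝ) / 2))
              ^ (1 - 1 / (1 + l + a)) *
          ((∫ ξ : EuclideanSpace ℝ (Fin 3),
              ‖ξ‖ ^ (-(2 * a)) * ‖𝓕 (⇑f : EuclideanSpace ℝ (Fin 3) → ℂ) ξ‖ ^ 2) ^ ((1 : ℝ) / 2))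
              ^ (1 / (1 + l + a)) := by
  refine ⟨1, one_pos, fun f hq => ?_⟩
  have hθ₁ : 1 / (1 + l + a) ≤ 1 :=
    div_le_one_of_le₀ (by linarith [l.cast_nonneg (α := ℝ)]) (by positivity)
  have hs : (1 - 1 / (1 + l + a)) * (2 * (l + 1)) + 1 / (1 + l + a) * -(2 * a) = 2 * (l : ℝ) := by
    field_simp
    ring
  have hp : Integrable (fun ξ : EuclideanSpace ℝ (Fin 3) =>
      ‖ξ‖ ^ (2 * (l + 1) : ℝ) * ‖𝓕 (⇑f : EuclideanSpace ℝ (Fin 3) → ℂ) ξ‖ ^ 2) := by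
    have := (𝓕 f).integrable_pow_mul_norm_sq volume (2 * l + 2)
    simp only [SchwartzMap.fourier_coe] at this
    convert this using 3 with ξ
    rw [← rpow_natCast]
    congr 1
    push_cast
    ring
  have hw : ∀ᵐ ξ : EuclideanSpace ℝ (Fin 3), 0 < ‖ξ‖ :=
    (Measure.ae_ne volume 0).mono fun ξ => norm_pos_iff.mpr
  rw [one_mul]
  exact rpow_le_rpow_rpow_mul_rpow_rpow (integral_nonneg fun ξ => by positivity)
    (integral_nonneg fun ξ => by positivity) (integral_nonneg fun ξ => by positivity)
    (by norm_num) (integral_rpow_mul_le_of_convexComb hw (.of_forall fun ξ => by positivity)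
      (by positivity) hθ₁ hs hp hq)
end

section
/- Let A₂ : [0,T) → ℝ be nonnegative C² with A₂'' + γA₂' ≤ D·A₂ + D·E₀, A₂(0) = a > 0, A₂'(0) = A₁(0) < 0, where γ, D, E₀ > 0. Set β = (-γ + √(γ² + 4D))/2. If D·(A₂(0) + E₀) + β·A₁(0) < 0, then the coefficient of e^{βt} in the comparison solution, namely A₂(0) + D·E₀/(β(β+γ)) + (A₁(0) - β·A₂(0) - D·E₀/(β+γ))/(γ+2β), is strictly negative; hence A₂(t) becomes negative in finite time, contradicting A₂ ≥ 0 — so T must be finite. -/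
/-!
Since `β(β + γ) = D`, the operator `u'' + γu' - Du` factors as `(∂ + (γ + β))(∂ - β)`. For
`u = A₂ + E₀` the inequality therefore says that `w = u' - βu` satisfies `w' + (γ + β)w ≤ 0`, so
`w(t) ≤ w(0)e^{-(γ+β)t}`, and integrating `(e^{-βt}u)' = e^{-βt}w` gives
`e^{-βt}u(t) ≤ u(0) + w(0)(1 - e^{-(γ+2β)t})/(γ + 2β)`. The right-hand side tends to
`K = u(0) + w(0)/(γ + 2β)`, the coefficient of the statement, and `β(γ + 2β)K = D·u(0) + β·u'(0)`
is negative by hypothesis. Hence `u(t) ≤ (K/2)e^{βt} → -∞`, which contradicts `A₂ ≥ 0`.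
-/

open Real Set Filter Topology

/-- The coefficient of `e^{βt}` in the solution of `u'' + γu' = β(β + γ)u`, `u(0) = u₀`,
`u'(0) = u₁`, whose other mode is `e^{-(γ+β)t}`. -/
noncomputable def growthCoeff (γ β u₀ u₁ : ℝ) : ℝ := u₀ + (u₁ - β * u₀) / (γ + 2 * β)

lemma growthCoeff_eq_div {γ β D : ℝ} (hβD : β * (β + γ) = D) (hβ : β ≠ 0)
    (hγβ : γ + 2 * β ≠ 0) (u₀ u₁ : ℝ) :
    growthCoeff γ β u₀ u₁ = (D * u₀ + β * u₁) / (β * (γ + 2 * β)) := by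
  rw [growthCoeff, add_div' _ _ _ hγβ, div_eq_div_iff hγβ (mul_ne_zero hβ hγβ), ← hβD]
  ring

lemma growthCoeff_add_const {γ β D : ℝ} (hβD : β * (β + γ) = D) (hD : D ≠ 0)
    (hβγ : β + γ ≠ 0) (a E₀ u₁ : ℝ) :
    growthCoeff γ β (a + E₀) u₁
      = a + D * E₀ / (β * (β + γ)) + (u₁ - β * a - D * E₀ / (β + γ)) / (γ + 2 * β) := by
  have h₁ : D * E₀ / (β * (β + γ)) = E₀ := by rw [hβD, mul_div_cancel_left₀ _ hD]
  have h₂ : D * E₀ / (β + γ) = β * E₀ := by rw [div_eq_iff hβγ, ← hβD]; ring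
  rw [growthCoeff, h₁, h₂]
  ring

lemma le_mul_exp_of_hasDerivWithinAt_add_mul_nonpos {w w' : ℝ → ℝ} {c : ℝ}
    (hw : ∀ x ∈ Ici (0 : ℝ), HasDerivWithinAt w (w' x) (Ici 0) x)
    (hle : ∀ x ∈ Ici (0 : ℝ), w' x + c * w x ≤ 0) {t : ℝ} (ht : 0 ≤ t) :
    w t ≤ w 0 * exp (-(c * t)) := by
  set g : ℝ → ℝ := fun x => exp (c * x) * w x
  have hg : ∀ x ∈ Ici (0 : ℝ),
      HasDerivWithinAt g (exp (c * x) * (w' x + c * w x)) (Ici 0) x := fun x hx =>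
    (((hasDerivAt_id' x).const_mul c).exp.hasDerivWithinAt.mul (hw x hx)).congr_deriv (by ring)
  have hanti : AntitoneOn g (Ici 0) := by
    refine antitoneOn_of_hasDerivWithinAt_nonpos (convex_Ici 0)
      (f' := fun x => exp (c * x) * (w' x + c * w x))
      (fun x hx => (hg x hx).continuousWithinAt) (fun x hx => ?_)
      (fun x hx => mul_nonpos_of_nonneg_of_nonpos (exp_pos _).le (hle x (interior_subset hx)))
    rw [interior_Ici] at hx
    exact ((hg x (mem_Ici.2 (le_of_lt hx))).hasDerivAt (Ici_mem_nhds hx)).hasDerivWithinAt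
  have hgt : exp (c * t) * w t ≤ w 0 := by
    simpa [g] using hanti self_mem_Ici ht ht
  calc w t = exp (c * t) * w t * exp (-(c * t)) := by
        rw [mul_right_comm, ← exp_add, add_neg_cancel, exp_zero, one_mul]
    _ ≤ w 0 * exp (-(c * t)) := mul_le_mul_of_nonneg_right hgt (exp_pos _).le

lemma exp_neg_mul_le_of_second_order_diff_ineq {u u' u'' : ℝ → ℝ} {γ β : ℝ}
    (hu : ∀ x ∈ Ici (0 : ℝ), HasDerivWithinAt u (u' x) (Ici 0) x)
    (hu' : ∀ x ∈ Ici (0 : ℝ), HasDerivWithinAt u' (u'' x) (Ici 0) x)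
    (hineq : ∀ x ∈ Ici (0 : ℝ), u'' x + γ * u' x ≤ β * (β + γ) * u x)
    (hγβ : γ + 2 * β ≠ 0) {t : ℝ} (ht : 0 ≤ t) :
    exp (-(β * t)) * u t
      ≤ u 0 + (u' 0 - β * u 0) / (γ + 2 * β) * (1 - exp (-((γ + 2 * β) * t))) := by
  set w₀ := u' 0 - β * u 0
  have hw : ∀ x ∈ Ici (0 : ℝ), u' x - β * u x ≤ w₀ * exp (-((γ + β) * x)) := fun x hx =>
    le_mul_exp_of_hasDerivWithinAt_add_mul_nonpos (w := fun y => u' y - β * u y)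
      (fun y hy => (hu' y hy).sub ((hu y hy).const_mul β))
      (fun y hy => by linarith [hineq y hy]) hx
  have hexp : ∀ (a x : ℝ), HasDerivWithinAt (fun y => exp (-(a * y))) (-a * exp (-(a * x)))
      (Ici 0) x := fun a x =>
    ((hasDerivAt_id' x).const_mul a).neg.exp.hasDerivWithinAt.congr_deriv (by simp [mul_comm])
  have hv : ∀ x ∈ Ici (0 : ℝ), HasDerivWithinAt
      (fun y => exp (-(β * y)) * u y - w₀ / (γ + 2 * β) * (1 - exp (-((γ + 2 * β) * y))))
      (exp (-(β * x)) * (u' x - β * u x) - w₀ * exp (-((γ + 2 * β) * x))) (Ici 0) x :=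
    fun x hx => (((hexp β x).mul (hu x hx)).sub
      (((hexp (γ + 2 * β) x).const_sub 1).const_mul _)).congr_deriv (by
        linear_combination -exp (-((γ + 2 * β) * x)) * div_mul_cancel₀ w₀ hγβ)
  have hv_le : ∀ x ∈ Ici (0 : ℝ),
      exp (-(β * x)) * (u' x - β * u x) ≤ w₀ * exp (-((γ + 2 * β) * x)) := fun x hx => by
    have hmul := mul_le_mul_of_nonneg_left (hw x hx) (exp_pos (-(β * x))).le
    rwa [mul_left_comm, ← exp_add, show -(β * x) + -((γ + β) * x) = -((γ + 2 * β) * x) by ring]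
      at hmul
  simpa using le_mul_exp_of_hasDerivWithinAt_add_mul_nonpos (c := 0) hv
    (fun x hx => by linarith [hv_le x hx]) ht

lemma tendsto_atBot_of_second_order_diff_ineq {u u' u'' : ℝ → ℝ} {γ β : ℝ}
    (hu : ∀ x ∈ Ici (0 : ℝ), HasDerivWithinAt u (u' x) (Ici 0) x)
    (hu' : ∀ x ∈ Ici (0 : ℝ), HasDerivWithinAt u' (u'' x) (Ici 0) x)
    (hineq : ∀ x ∈ Ici (0 : ℝ), u'' x + γ * u' x ≤ β * (β + γ) * u x)
    (hβ : 0 < β) (hγβ : 0 < γ + 2 * β) (hK : growthCoeff γ β (u 0) (u' 0) < 0) :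
    Tendsto u atTop atBot := by
  set K := growthCoeff γ β (u 0) (u' 0)
  have hdecay : Tendsto (fun t => exp (-((γ + 2 * β) * t))) atTop (𝓝 0) :=
    tendsto_exp_neg_atTop_nhds_zero.comp (tendsto_id.const_mul_atTop hγβ)
  have hbound : Tendsto
      (fun t => u 0 + (u' 0 - β * u 0) / (γ + 2 * β) * (1 - exp (-((γ + 2 * β) * t))))
      atTop (𝓝 K) := by
    simpa [K, growthCoeff] using
      ((hdecay.const_sub 1).const_mul ((u' 0 - β * u 0) / (γ + 2 * β))).const_add (u 0)
  have hgrowth : Tendsto (fun t => K / 2 * exp (β * t)) atTop atBot :=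
    (tendsto_exp_atTop.comp (tendsto_id.const_mul_atTop hβ)).const_mul_atTop_of_neg (by linarith)
  refine tendsto_atBot_mono' atTop ?_ hgrowth
  filter_upwards [hbound.eventually_lt_const (by linarith : K < K / 2), eventually_ge_atTop 0]
    with t hlt ht
  have hscaled := (exp_neg_mul_le_of_second_order_diff_ineq hu hu' hineq hγβ.ne' ht).trans_lt hlt
  have hu_lt := mul_lt_mul_of_pos_left hscaled (exp_pos (β * t))
  rw [← mul_assoc, ← exp_add, add_neg_cancel, exp_zero, one_mul] at hu_lt
  linarith

section QuadraticRoot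

variable {γ D β : ℝ} (hβ : β = (-γ + √(γ ^ 2 + 4 * D)) / 2)
include hβ

lemma mul_add_eq_of_eq_quadratic_root (hdisc : 0 ≤ γ ^ 2 + 4 * D) : β * (β + γ) = D := by
  have := sq_sqrt hdisc
  rw [hβ]
  linear_combination this / 4

lemma add_two_mul_pos_of_eq_quadratic_root (hdisc : 0 < γ ^ 2 + 4 * D) : 0 < γ + 2 * β := by
  rw [hβ]
  linarith [sqrt_pos.2 hdisc]

lemma pos_of_eq_quadratic_root (hD : 0 < D) : 0 < β := by
  have : γ ^ 2 < √(γ ^ 2 + 4 * D) ^ 2 := by rw [sq_sqrt (by positivity)]; linarith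
  rw [hβ]
  linarith [abs_lt_of_sq_lt_sq' this (sqrt_nonneg _)]

end QuadraticRoot

theorem stmt9_general (γ D E₀ β : ℝ) (hD : 0 < D)
    (hβ : β = (-γ + Real.sqrt (γ ^ 2 + 4 * D)) / 2)
    (A₂ : ℝ → ℝ) (hC2 : ContDiffOn ℝ 2 A₂ (Ici 0))
    (hnn : ∀ t ∈ Ici (0 : ℝ), 0 ≤ A₂ t)
    (hineq : ∀ t ∈ Ici (0 : ℝ),
      derivWithin (derivWithin A₂ (Ici 0)) (Ici 0) t + γ * derivWithin A₂ (Ici 0) t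
        ≤ D * A₂ t + D * E₀)
    (hcond : D * (A₂ 0 + E₀) + β * derivWithin A₂ (Ici 0) 0 < 0) :
    (A₂ 0 + D * E₀ / (β * (β + γ))
        + (derivWithin A₂ (Ici 0) 0 - β * A₂ 0 - D * E₀ / (β + γ)) / (γ + 2 * β) < 0)
      ∧ False := by
  have hβ_pos := pos_of_eq_quadratic_root hβ hD
  have hβD := mul_add_eq_of_eq_quadratic_root hβ (by positivity)
  have hγβ := add_two_mul_pos_of_eq_quadratic_root hβ (by positivity)
  have hβγ : 0 < β + γ := pos_of_mul_pos_right (hβD ▸ hD) hβ_pos.le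
  have hK : growthCoeff γ β (A₂ 0 + E₀) (derivWithin A₂ (Ici 0) 0) < 0 := by
    rw [growthCoeff_eq_div hβD hβ_pos.ne' hγβ.ne']
    exact div_neg_of_neg_of_pos hcond (by positivity)
  refine ⟨growthCoeff_add_const hβD hD.ne' hβγ.ne' (A₂ 0) E₀ _ ▸ hK, ?_⟩
  have hA₂ : ∀ x ∈ Ici (0 : ℝ), HasDerivWithinAt (fun y => A₂ y + E₀)
      (derivWithin A₂ (Ici 0) x) (Ici 0) x := fun x hx =>
    ((hC2.differentiableOn two_ne_zero x hx).hasDerivWithinAt).add_const E₀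
  have hA₂' : ∀ x ∈ Ici (0 : ℝ), HasDerivWithinAt (derivWithin A₂ (Ici 0))
      (derivWithin (derivWithin A₂ (Ici 0)) (Ici 0) x) (Ici 0) x := fun x hx =>
    ((hC2.derivWithin (uniqueDiffOn_Ici 0) le_rfl).differentiableOn one_ne_zero x
      hx).hasDerivWithinAt
  have hdiverge := tendsto_atBot_of_second_order_diff_ineq hA₂ hA₂'
    (fun x hx => by rw [hβD]; linarith [hineq x hx]) hβ_pos hγβ hK
  obtain ⟨t, hlt, ht⟩ := ((hdiverge.eventually_lt_atBot E₀).and (eventually_ge_atTop 0)).exists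
  linarith [hnn t ht]

/-- Blow-up via the second-order differential inequality: if a nonnegative `C²`
function `A₂` satisfied `A₂'' + γA₂' ≤ D·A₂ + D·E₀` globally with `A₂(0) > 0`,
`A₂'(0) < 0` and `D(A₂(0)+E₀) + β·A₂'(0) < 0` (β the positive root of β²+γβ = D),
then the coefficient of `e^{βt}` in the comparison solution is strictly negative and
`A₂` would become negative in finite time — a contradiction, so no such global
nonnegative solution exists (`T` must be finite). -/
theorem stmt9 (γ D E₀ β : ℝ) (hγ : 0 < γ) (hD : 0 < D) (hE₀ : 0 < E₀)
    (hβ : β = (-γ + Real.sqrt (γ ^ 2 + 4 * D)) / 2)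
    (A₂ : ℝ → ℝ) (hC2 : ContDiffOn ℝ 2 A₂ (Ici 0))
    (hnn : ∀ t ∈ Ici (0 : ℝ), 0 ≤ A₂ t)
    (hineq : ∀ t ∈ Ici (0 : ℝ),
      derivWithin (derivWithin A₂ (Ici 0)) (Ici 0) t + γ * derivWithin A₂ (Ici 0) t
        ≤ D * A₂ t + D * E₀)
    (ha : 0 < A₂ 0) (ha' : derivWithin A₂ (Ici 0) 0 < 0)
    (hcond : D * (A₂ 0 + E₀) + β * derivWithin A₂ (Ici 0) 0 < 0) :
    (A₂ 0 + D * E₀ / (β * (β + γ))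
        + (derivWithin A₂ (Ici 0) 0 - β * A₂ 0 - D * E₀ / (β + γ)) / (γ + 2 * β) < 0)
      ∧ False :=
  stmt9_general γ D E₀ β hD hβ A₂ hC2 hnn hineq hcond
end

section
/- Let γ > 0, a₀ > 0, C* > 0, and set D = C*·a₀/√γ, β = (-γ + √(γ² + 4D))/2. Suppose M > (8C*²a₀²)^{1/5} and 4(C*a₀/M²)² < γ < M/2. Then β > D/M. -/
open Real

/-- Arithmetic core of the blow-up criterion (Theorem 1.5): with
`D = C*a₀/√γ` and `β` the positive root of `λ² + γλ = D`, the conditions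
`M > (8C*²a₀²)^{1/5}` and `4(C*a₀/M²)² < γ < M/2` imply `β > D/M`. -/
theorem stmt11 (γ a₀ Cs M D β : ℝ) (hγ : 0 < γ) (ha₀ : 0 < a₀) (hCs : 0 < Cs)
    (hD : D = Cs * a₀ / Real.sqrt γ)
    (hβ : β = (-γ + Real.sqrt (γ ^ 2 + 4 * D)) / 2)
    (hM : M > (8 * Cs ^ 2 * a₀ ^ 2) ^ ((1 : ℝ) / 5))
    (hγlow : 4 * (Cs * a₀ / M ^ 2) ^ 2 < γ) (hγup : γ < M / 2) :
    β > D / M := by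
  have hMpos : 0 < M := lt_trans (by positivity) hM
  have hsγpos : 0 < Real.sqrt γ := Real.sqrt_pos.mpr hγ
  have hDpos : 0 < D := by rw [hD]; positivity
  -- √γ > 2 Cs a₀ / M²
  have hsγ : Real.sqrt γ > 2 * Cs * a₀ / M ^ 2 := by
    have heq : (2 * Cs * a₀ / M ^ 2) ^ 2 = 4 * (Cs * a₀ / M ^ 2) ^ 2 := by ring
    have h : Real.sqrt ((2 * Cs * a₀ / M ^ 2) ^ 2) < Real.sqrt γ :=
      Real.sqrt_lt_sqrt (by positivity) (by linarith)
    rwa [Real.sqrt_sq (by positivity)] at h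
  -- D < M²/2
  have hDlt : D < M ^ 2 / 2 := by
    rw [hD, div_lt_iff₀ hsγpos]
    have h3 : M ^ 2 / 2 * (2 * Cs * a₀ / M ^ 2) = Cs * a₀ := by
      field_simp
    nlinarith [mul_lt_mul_of_pos_left hsγ (show (0:ℝ) < M ^ 2 / 2 by positivity)]
  have hsum : D + γ * M < M ^ 2 := by nlinarith
  have hs2 : Real.sqrt (γ ^ 2 + 4 * D) ^ 2 = γ ^ 2 + 4 * D :=
    Real.sq_sqrt (by positivity)
  have hβeq : β ^ 2 + γ * β = D := by rw [hβ]; nlinarith [hs2]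
  have hβγ : 0 < β + γ := by
    rw [hβ]
    have := Real.sqrt_nonneg (γ ^ 2 + 4 * D)
    linarith
  have hβpos : 0 < β := by nlinarith
  by_contra h
  push_neg at h
  have h1 : D ≤ (D / M) ^ 2 + γ * (D / M) := by nlinarith
  have h2 : (D / M) ^ 2 + γ * (D / M) < D := by
    have hM2 : (0:ℝ) < M ^ 2 := by positivity
    rw [← sub_pos]
    have key : D - ((D / M) ^ 2 + γ * (D / M)) = D * (M ^ 2 - (D + γ * M)) / M ^ 2 := by
      field_simp
    rw [key]
    exact div_pos (mul_pos hDpos (by linarith)) hM2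
  linarith
end

section
/- Let γ > 0, η > 0, and r₀ ∈ (0, γ/2). For any f ∈ L¹(ℝ³) ∩ L²(ℝ³) whose derivatives up to order k are in L², define (G₁₁ * f) on the Fourier side by multiplication with ĝ(ξ,t) = (λ₃e^{λ₄t} - λ₄e^{λ₃t})/(λ₃ - λ₄) where λ₃,λ₄ are the roots of λ² + γλ + |ξ|² = 0. Assuming the pointwise bounds |ĝ(ξ,t)| ≤ C·e^{-|ξ|²t/γ} for |ξ| < r₀ and |ĝ(ξ,t)| ≤ C·e^{-ηt} for |ξ| ≥ r₀, one has ‖∇^k(G₁₁ * f)(·,t)‖_{L²} ≤ C'·(1+t)^{-3/4 - k/2}·(‖f‖_{L¹} + ‖∇^k f‖_{L²}) for all t ≥ 0. -/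
open Real MeasureTheory Module

/-!
Split frequency space at `‖ξ‖ = r₀`. Outside the ball `|ĝ|² ≤ Cg² e^{-2ηt}`, and exponential
decay beats every power of `1 + t`, so this part is controlled by `‖∇^k f‖²`. Inside the ball
`‖f̂‖_∞ ≤ ‖f‖_{L¹}`, and since `‖ξ‖ < r₀` the Gaussian bound can be traded for
`e^{2r₀²/γ} e^{-2(1+t)‖ξ‖²/γ}`; by scaling, its `‖ξ‖^{2k}`-moment is a constant times
`(1 + t)^{-3/2-k}`, uniformly in `t ≥ 0`. Taking square roots gives the estimate.
-/

theorem exp_neg_mul_le_mul_one_add_rpow_neg {a p t : ℝ} (ha : 0 < a) (hp : 0 < p) (ht : 0 ≤ t) :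
    exp (-(a * t)) ≤ (1 + p / a) ^ p * (1 + t) ^ (-p) := by
  have hlin : 1 + t ≤ (1 + p / a) * exp (a * t / p) := by
    have h1 : 1 ≤ exp (a * t / p) := one_le_exp (by positivity)
    have h2 : a * t / p ≤ exp (a * t / p) := by linarith [add_one_le_exp (a * t / p)]
    have ht' : t = p / a * (a * t / p) := by field_simp
    nlinarith [mul_le_mul_of_nonneg_left h2 (by positivity : 0 ≤ p / a)]
  have hpow : (1 + t) ^ p ≤ (1 + p / a) ^ p * exp (a * t) := by
    calc (1 + t) ^ p ≤ ((1 + p / a) * exp (a * t / p)) ^ p :=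
          rpow_le_rpow (by linarith) hlin hp.le
      _ = (1 + p / a) ^ p * exp (a * t) := by
        rw [mul_rpow (by positivity) (exp_pos _).le, ← exp_mul, div_mul_cancel₀ _ hp.ne']
  rw [exp_neg, rpow_neg (by linarith), ← div_eq_mul_inv, le_div_iff₀ (by positivity),
    inv_mul_le_iff₀ (exp_pos _), mul_comm (exp _)]
  exact hpow

theorem sq_le_gaussian_add_exp {γ η r₀ C t s w : ℝ} (hγ : 0 < γ) (hs : 0 ≤ s)
    (hw : 0 ≤ w) (hlow : s < r₀ → w ≤ C * exp (-s ^ 2 * t / γ))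
    (hhigh : r₀ ≤ s → w ≤ C * exp (-η * t)) :
    w ^ 2 ≤ C ^ 2 * exp (2 * r₀ ^ 2 / γ) * exp (-(2 / γ * (1 + t)) * s ^ 2)
      + C ^ 2 * exp (-(2 * η * t)) := by
  have hsq : ∀ {x}, w ≤ C * exp x → w ^ 2 ≤ C ^ 2 * exp (2 * x) := fun h => by
    calc w ^ 2 ≤ (C * exp _) ^ 2 := pow_le_pow_left₀ hw h 2
      _ = C ^ 2 * exp (2 * _) := by rw [mul_pow, ← exp_nat_mul]; norm_num
  rcases lt_or_ge s r₀ with hsr | hsr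
  · have hexp : 2 * (-s ^ 2 * t / γ) ≤ 2 * r₀ ^ 2 / γ + -(2 / γ * (1 + t)) * s ^ 2 := by
      have : s ^ 2 ≤ r₀ ^ 2 := pow_le_pow_left₀ hs hsr.le 2
      field_simp
      nlinarith
    calc w ^ 2 ≤ C ^ 2 * exp (2 * (-s ^ 2 * t / γ)) := hsq (hlow hsr)
      _ ≤ C ^ 2 * exp (2 * r₀ ^ 2 / γ) * exp (-(2 / γ * (1 + t)) * s ^ 2) := by
        rw [mul_assoc, ← exp_add]; gcongr
      _ ≤ _ := le_add_of_nonneg_right (by positivity)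
  · calc w ^ 2 ≤ C ^ 2 * exp (2 * (-η * t)) := hsq (hhigh hsr)
      _ = C ^ 2 * exp (-(2 * η * t)) := by ring_nf
      _ ≤ _ := le_add_of_nonneg_left (by positivity)

section GaussianMoments

variable {E : Type*} [NormedAddCommGroup E] [MeasurableSpace E] (μ : Measure E)

noncomputable def gaussianMoment (n : ℕ) : ℝ := ∫ x, ‖x‖ ^ n * exp (-‖x‖ ^ 2) ∂μ

theorem gaussianMoment_nonneg (n : ℕ) : 0 ≤ gaussianMoment μ n :=
  integral_nonneg fun _ => by positivity

variable [NormedSpace ℝ E] [FiniteDimensional ℝ E] [BorelSpace E] [μ.IsAddHaarMeasure]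

theorem integrable_norm_pow_mul_exp_neg_mul_sq [Nontrivial E] (n : ℕ) {b : ℝ} (hb : 0 < b) :
    Integrable (fun x : E => ‖x‖ ^ n * exp (-b * ‖x‖ ^ 2)) μ := by
  rw [integrable_fun_norm_addHaar μ (f := fun y => y ^ n * exp (-b * y ^ 2))]
  refine (integrableOn_rpow_mul_exp_neg_mul_sq hb (s := (finrank ℝ E - 1 + n : ℕ))
    (by linarith [(Nat.cast_nonneg _ : (0:ℝ) ≤ (finrank ℝ E - 1 + n : ℕ))])).congr_fun
    (fun y _ => ?_) measurableSet_Ioi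
  simp only [rpow_natCast, smul_eq_mul, ← mul_assoc, ← pow_add]

theorem integral_norm_pow_mul_exp_neg_mul_sq (n : ℕ) {b : ℝ} (hb : 0 < b) :
    ∫ x, ‖x‖ ^ n * exp (-b * ‖x‖ ^ 2) ∂μ
      = b ^ (-((finrank ℝ E + n : ℝ) / 2)) * gaussianMoment μ n := by
  rw [gaussianMoment]
  have hsqrt : ∀ m : ℕ, √b ^ m = b ^ ((m : ℝ) / 2) := fun m => by
    rw [sqrt_eq_rpow, ← rpow_natCast, ← rpow_mul hb.le]; ring_nf
  have hscale := Measure.integral_comp_smul μ (fun x : E => ‖x‖ ^ n * exp (-‖x‖ ^ 2)) (√b)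
  simp only [norm_smul, norm_of_nonneg (sqrt_nonneg b), mul_pow, sq_sqrt hb.le, mul_assoc,
    integral_const_mul, ← neg_mul, hsqrt, smul_eq_mul] at hscale
  rw [abs_of_nonneg (by positivity), ← rpow_neg hb.le] at hscale
  rw [eq_inv_mul_iff_mul_eq₀ (by positivity) |>.mpr hscale, ← rpow_neg hb.le, ← mul_assoc,
    ← rpow_add hb]
  ring_nf

theorem integral_norm_pow_mul_sq_mul_sq_le [Nontrivial E] {F G : Type*}
    [NormedAddCommGroup F] [NormedAddCommGroup G] {w : E → F} {φ : E → G} (n : ℕ)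
    {L H c M : ℝ} (hc : 0 < c) (hL : 0 ≤ L)
    (hw : ∀ ξ, ‖w ξ‖ ^ 2 ≤ L * exp (-c * ‖ξ‖ ^ 2) + H) (hφ : ∀ ξ, ‖φ ξ‖ ≤ M)
    (hφint : Integrable (fun ξ => ‖ξ‖ ^ n * ‖φ ξ‖ ^ 2) μ) :
    ∫ ξ, ‖ξ‖ ^ n * ‖w ξ‖ ^ 2 * ‖φ ξ‖ ^ 2 ∂μ
      ≤ L * M ^ 2 * (c ^ (-((finrank ℝ E + n : ℝ) / 2)) * gaussianMoment μ n)
        + H * ∫ ξ, ‖ξ‖ ^ n * ‖φ ξ‖ ^ 2 ∂μ := by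
  set gauss := fun ξ : E => ‖ξ‖ ^ n * exp (-c * ‖ξ‖ ^ 2)
  set weight := fun ξ => ‖ξ‖ ^ n * ‖φ ξ‖ ^ 2
  have hpoint : ∀ ξ, ‖ξ‖ ^ n * ‖w ξ‖ ^ 2 * ‖φ ξ‖ ^ 2
      ≤ L * M ^ 2 * gauss ξ + H * weight ξ := fun ξ => by
    have hφ2 : ‖φ ξ‖ ^ 2 ≤ M ^ 2 := pow_le_pow_left₀ (norm_nonneg _) (hφ ξ) 2
    calc ‖ξ‖ ^ n * ‖w ξ‖ ^ 2 * ‖φ ξ‖ ^ 2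
        ≤ ‖ξ‖ ^ n * (L * exp (-c * ‖ξ‖ ^ 2) + H) * ‖φ ξ‖ ^ 2 := by gcongr; exact hw ξ
      _ = L * gauss ξ * ‖φ ξ‖ ^ 2 + H * weight ξ := by ring
      _ ≤ L * gauss ξ * M ^ 2 + H * weight ξ := by gcongr
      _ = _ := by ring
  have hgauss := (integrable_norm_pow_mul_exp_neg_mul_sq μ n hc).const_mul (L * M ^ 2)
  calc ∫ ξ, ‖ξ‖ ^ n * ‖w ξ‖ ^ 2 * ‖φ ξ‖ ^ 2 ∂μ
      ≤ ∫ ξ, L * M ^ 2 * gauss ξ + H * weight ξ ∂μ :=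
        integral_mono_of_nonneg (.of_forall fun ξ => by positivity)
          (hgauss.add (hφint.const_mul H)) (.of_forall hpoint)
    _ = _ := by
        rw [integral_add hgauss (hφint.const_mul H), integral_const_mul, integral_const_mul,
          integral_norm_pow_mul_exp_neg_mul_sq μ n hc]

theorem integral_le_of_gaussian_low_exp_high [Nontrivial E] {F G : Type*}
    [NormedAddCommGroup F] [NormedAddCommGroup G] {w : E → F} {φ : E → G} (n : ℕ)
    {γ η r₀ C t M p : ℝ} (hγ : 0 < γ) (hη : 0 < η) (ht : 0 ≤ t)
    (hlow : ∀ ξ, ‖ξ‖ < r₀ → ‖w ξ‖ ≤ C * exp (-‖ξ‖ ^ 2 * t / γ))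
    (hhigh : ∀ ξ, r₀ ≤ ‖ξ‖ → ‖w ξ‖ ≤ C * exp (-η * t)) (hφ : ∀ ξ, ‖φ ξ‖ ≤ M)
    (hφint : Integrable (fun ξ => ‖ξ‖ ^ n * ‖φ ξ‖ ^ 2) μ)
    (hp : (finrank ℝ E + n : ℝ) / 2 = p) :
    ∫ ξ, ‖ξ‖ ^ n * ‖w ξ‖ ^ 2 * ‖φ ξ‖ ^ 2 ∂μ
      ≤ (C ^ 2 * exp (2 * r₀ ^ 2 / γ) * (2 / γ) ^ (-p) * gaussianMoment μ n * M ^ 2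
          + C ^ 2 * (1 + p / (2 * η)) ^ p * ∫ ξ, ‖ξ‖ ^ n * ‖φ ξ‖ ^ 2 ∂μ) * (1 + t) ^ (-p) := by
  have hp0 : 0 < p := by rw [← hp]; have := finrank_pos (R := ℝ) (M := E); positivity
  have hsplit := integral_norm_pow_mul_sq_mul_sq_le μ n (w := w) (c := 2 / γ * (1 + t))
    (by positivity) (by positivity)
    (fun ξ => sq_le_gaussian_add_exp hγ (norm_nonneg ξ) (norm_nonneg _) (hlow ξ) (hhigh ξ))
    hφ hφint
  have hdecay := exp_neg_mul_le_mul_one_add_rpow_neg (mul_pos two_pos hη) hp0 ht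
  have hN : 0 ≤ ∫ ξ, ‖ξ‖ ^ n * ‖φ ξ‖ ^ 2 ∂μ := integral_nonneg fun ξ => by positivity
  rw [hp, mul_rpow (by positivity) (by positivity)] at hsplit
  calc _ ≤ _ := hsplit
    _ ≤ C ^ 2 * exp (2 * r₀ ^ 2 / γ) * M ^ 2
            * ((2 / γ) ^ (-p) * (1 + t) ^ (-p) * gaussianMoment μ n)
          + C ^ 2 * ((1 + p / (2 * η)) ^ p * (1 + t) ^ (-p))
            * ∫ ξ, ‖ξ‖ ^ n * ‖φ ξ‖ ^ 2 ∂μ := by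
        gcongr
    _ = _ := by ring

end GaussianMoments

theorem sqrt_mul_sq_add_mul_le {A B M N : ℝ} (hA : 0 ≤ A) (hB : 0 ≤ B) (hM : 0 ≤ M)
    (hN : 0 ≤ N) : √(A * M ^ 2 + B * N) ≤ (√A + √B) * (M + √N) := by
  have hu : 0 ≤ √A * M := by positivity
  have hv : 0 ≤ √B * √N := by positivity
  calc √(A * M ^ 2 + B * N) = √((√A * M) ^ 2 + (√B * √N) ^ 2) := by
        rw [mul_pow, mul_pow, sq_sqrt hA, sq_sqrt hB, sq_sqrt hN]
    _ ≤ √A * M + √B * √N := by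
        rw [sqrt_le_left (by positivity)]; nlinarith
    _ ≤ (√A + √B) * (M + √N) := by
        have := sqrt_nonneg A; have := sqrt_nonneg B; have := sqrt_nonneg N
        nlinarith [mul_nonneg ‹0 ≤ √A› ‹0 ≤ √N›, mul_nonneg ‹0 ≤ √B› hM]

theorem rpow_half_le_of_le_mul_sq_add {J A B M N x : ℝ} (hA : 0 ≤ A) (hB : 0 ≤ B)
    (hM : 0 ≤ M) (hN : 0 ≤ N) (hx : 0 ≤ x) (hJ : J ≤ (A * M ^ 2 + B * N) * x) :
    J ^ ((1 : ℝ) / 2) ≤ (√A + √B + 1) * x ^ ((1 : ℝ) / 2) * (M + N ^ ((1 : ℝ) / 2)) := by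
  simp only [← sqrt_eq_rpow]
  calc √J ≤ √(A * M ^ 2 + B * N) * √x := by rw [← sqrt_mul' _ hx]; exact sqrt_le_sqrt hJ
    _ ≤ (√A + √B) * (M + √N) * √x := by gcongr; exact sqrt_mul_sq_add_mul_le hA hB hM hN
    _ ≤ _ := by
      have : 0 ≤ √x * (M + √N) := by positivity
      nlinarith

theorem stmt12_general (γ η r₀ Cg : ℝ) (k : ℕ) (hγ : 0 < γ) (hη : 0 < η) :
    ∃ C' > 0, ∀ (f : EuclideanSpace ℝ (Fin 3) → ℂ)
      (g : EuclideanSpace ℝ (Fin 3) → ℝ → ℂ),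
      Integrable f →
      Integrable (fun ξ : EuclideanSpace ℝ (Fin 3) =>
        ‖ξ‖ ^ (2 * k) * ‖VectorFourier.fourierIntegral Real.fourierChar volume (innerₗ (EuclideanSpace ℝ (Fin 3))) f ξ‖ ^ 2) →
      (∀ t : ℝ, 0 ≤ t → Measurable fun ξ => g ξ t) →
      (∀ t : ℝ, 0 ≤ t → ∀ ξ : EuclideanSpace ℝ (Fin 3), ‖ξ‖ < r₀ →
        ‖g ξ t‖ ≤ Cg * Real.exp (-‖ξ‖ ^ 2 * t / γ)) →
      (∀ t : ℝ, 0 ≤ t → ∀ ξ : EuclideanSpace ℝ (Fin 3), r₀ ≤ ‖ξ‖ →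
        ‖g ξ t‖ ≤ Cg * Real.exp (-η * t)) →
      ∀ t : ℝ, 0 ≤ t →
        (∫ ξ : EuclideanSpace ℝ (Fin 3),
            ‖ξ‖ ^ (2 * k) * ‖g ξ t‖ ^ 2 * ‖VectorFourier.fourierIntegral Real.fourierChar volume (innerₗ (EuclideanSpace ℝ (Fin 3))) f ξ‖ ^ 2) ^ ((1 : ℝ) / 2)
          ≤ C' * (1 + t) ^ (-(3 : ℝ) / 4 - (k : ℝ) / 2) *
            ((∫ x : EuclideanSpace ℝ (Fin 3), ‖f x‖) +
              (∫ ξ : EuclideanSpace ℝ (Fin 3),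
                ‖ξ‖ ^ (2 * k) * ‖VectorFourier.fourierIntegral Real.fourierChar volume (innerₗ (EuclideanSpace ℝ (Fin 3))) f ξ‖ ^ 2) ^ ((1 : ℝ) / 2)) := by
  set p : ℝ := 3 / 2 + k
  have hdim : ((finrank ℝ (EuclideanSpace ℝ (Fin 3)) : ℝ) + (2 * k : ℕ)) / 2 = p := by
    rw [finrank_euclideanSpace_fin]; push_cast; ring
  set A := Cg ^ 2 * exp (2 * r₀ ^ 2 / γ) * (2 / γ) ^ (-p) *
    gaussianMoment (volume : Measure (EuclideanSpace ℝ (Fin 3))) (2 * k)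
  set B := Cg ^ 2 * (1 + p / (2 * η)) ^ p
  have hA : 0 ≤ A := mul_nonneg (by positivity) (gaussianMoment_nonneg _ _)
  refine ⟨√A + √B + 1, by positivity, ?_⟩
  intro f g _ hfk _ hlow hhigh t ht
  have hJ := integral_le_of_gaussian_low_exp_high volume (w := fun ξ => g ξ t) (2 * k)
    hγ hη ht (hlow t ht) (hhigh t ht)
    (VectorFourier.norm_fourierIntegral_le_integral_norm _ _ _ f) hfk hdim
  have hexp : ((1 + t) ^ (-p)) ^ ((1 : ℝ) / 2) = (1 + t) ^ (-(3 : ℝ) / 4 - (k : ℝ) / 2) := by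
    rw [← rpow_mul (by positivity)]
    congr 1
    simp only [p]
    ring
  rw [← hexp]
  exact rpow_half_le_of_le_mul_sq_add hA (by positivity)
    (integral_nonneg fun x => norm_nonneg _) (integral_nonneg fun ξ => by positivity)
    (by positivity) hJ

/-- Green-function decay estimate (Lemma 4.4, estimate for `G₁₁`), stated on the
Fourier side via Plancherel: if the multiplier `ĝ(ξ,t)` satisfies a Gaussian bound
on low frequencies and an exponential bound on high frequencies, then
`‖∇^k(G₁₁ * f)(t)‖_{L²} ≤ C'(1+t)^{-3/4-k/2}(‖f‖_{L¹} + ‖∇^k f‖_{L²})`. -/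
theorem stmt12 (γ η r₀ Cg : ℝ) (k : ℕ) (hγ : 0 < γ) (hη : 0 < η)
    (hr₀ : 0 < r₀) (hr₀' : r₀ < γ / 2) (hCg : 0 < Cg) :
    ∃ C' > 0, ∀ (f : EuclideanSpace ℝ (Fin 3) → ℂ)
      (g : EuclideanSpace ℝ (Fin 3) → ℝ → ℂ),
      Integrable f →
      Integrable (fun ξ : EuclideanSpace ℝ (Fin 3) =>
        ‖ξ‖ ^ (2 * k) * ‖VectorFourier.fourierIntegral Real.fourierChar volume (innerₗ (EuclideanSpace ℝ (Fin 3))) f ξ‖ ^ 2) →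
      (∀ t : ℝ, 0 ≤ t → Measurable fun ξ => g ξ t) →
      (∀ t : ℝ, 0 ≤ t → ∀ ξ : EuclideanSpace ℝ (Fin 3), ‖ξ‖ < r₀ →
        ‖g ξ t‖ ≤ Cg * Real.exp (-‖ξ‖ ^ 2 * t / γ)) →
      (∀ t : ℝ, 0 ≤ t → ∀ ξ : EuclideanSpace ℝ (Fin 3), r₀ ≤ ‖ξ‖ →
        ‖g ξ t‖ ≤ Cg * Real.exp (-η * t)) →
      ∀ t : ℝ, 0 ≤ t →
        (∫ ξ : EuclideanSpace ℝ (Fin 3),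
            ‖ξ‖ ^ (2 * k) * ‖g ξ t‖ ^ 2 * ‖VectorFourier.fourierIntegral Real.fourierChar volume (innerₗ (EuclideanSpace ℝ (Fin 3))) f ξ‖ ^ 2) ^ ((1 : ℝ) / 2)
          ≤ C' * (1 + t) ^ (-(3 : ℝ) / 4 - (k : ℝ) / 2) *
            ((∫ x : EuclideanSpace ℝ (Fin 3), ‖f x‖) +
              (∫ ξ : EuclideanSpace ℝ (Fin 3),
                ‖ξ‖ ^ (2 * k) * ‖VectorFourier.fourierIntegral Real.fourierChar volume (innerₗ (EuclideanSpace ℝ (Fin 3))) f ξ‖ ^ 2) ^ ((1 : ℝ) / 2)) :=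
  stmt12_general γ η r₀ Cg k hγ hη
end
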